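/- Let R be a commutative ring, S a multiplicative subset of R, and M an R-module. The following are equivalent: (1) M is u-S-semisimple; (2) every R-module is u-S-injective relative to M; (3) every R-module is u-S-projective relative to M. -/

import Mathlib

universe u v w

variable (R : Type u) [CommRing R]

/-- An `R`-module `T` is uniformly `S`-torsion if there is `s ∈ S` with `s • T = 0`. -/
def IsUSTorsion (S : Submonoid R) (T : Type*) [AddCommGroup T] [Module R T] : Prop :=
  ∃ s ∈ S, ∀ t : T, s • t = 0

/-- `f` is a `u`-`S`-epimorphism if its cokernel is uniformly `S`-torsion. -/
def IsUSEpi (S : Submonoid R) {M N : Type*} [AddCommGroup M] [Module R M]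
    [AddCommGroup N] [Module R N] (f : M →ₗ[R] N) : Prop :=
  IsUSTorsion R S (N ⧸ LinearMap.range f)

/-- `f` is a `u`-`S`-monomorphism if its kernel is uniformly `S`-torsion. -/
def IsUSMono (S : Submonoid R) {M N : Type*} [AddCommGroup M] [Module R M]
    [AddCommGroup N] [Module R N] (f : M →ₗ[R] N) : Prop :=
  IsUSTorsion R S (LinearMap.ker f)

/-- `P` is `u`-`S`-projective relative to `M` if for every `u`-`S`-epimorphism
`f : M → N`, the induced map `Hom(P,M) → Hom(P,N)` is a `u`-`S`-epimorphism. -/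
def IsUSProjRel (S : Submonoid R) (P : Type w) [AddCommGroup P] [Module R P]
    (M : Type v) [AddCommGroup M] [Module R M] : Prop :=
  ∀ (N : Type v) [AddCommGroup N] [Module R N] (f : M →ₗ[R] N),
    IsUSEpi R S f → IsUSEpi R S (LinearMap.llcomp (σ₁₂ := RingHom.id R) (σ₁₃ := RingHom.id R) R P M N f)

/-- `E` is `u`-`S`-injective relative to `M` if for every `u`-`S`-monomorphism
`f : K → M`, the induced map `Hom(M,E) → Hom(K,E)` is a `u`-`S`-epimorphism. -/
def IsUSInjRel (S : Submonoid R) (E : Type w) [AddCommGroup E] [Module R E]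
    (M : Type v) [AddCommGroup M] [Module R M] : Prop :=
  ∀ (K : Type v) [AddCommGroup K] [Module R K] (f : K →ₗ[R] M),
    IsUSMono R S f → IsUSEpi R S (LinearMap.lcomp R E f)


/-- `M` is `u`-`S`-semisimple if every short `u`-`S`-exact sequence
`0 → A → M → C → 0` is `u`-`S`-split. -/
def IsUSSemisimple (S : Submonoid R) (M : Type v) [AddCommGroup M] [Module R M] : Prop :=
  ∀ (A : Type v) [AddCommGroup A] [Module R A] (C : Type v) [AddCommGroup C] [Module R C]
    (f : A →ₗ[R] M) (g : M →ₗ[R] C),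
    IsUSMono R S f → IsUSEpi R S g →
    (∃ s ∈ S, (∀ x ∈ LinearMap.ker g, s • x ∈ LinearMap.range f) ∧
        (∀ x ∈ LinearMap.range f, s • x ∈ LinearMap.ker g)) →
    ∃ s ∈ S, ∃ f' : M →ₗ[R] A, f' ∘ₗ f = s • LinearMap.id

section Aux

variable {R} {S : Submonoid R}

lemma isUSEpi_iff {M N : Type*} [AddCommGroup M] [Module R M]
    [AddCommGroup N] [Module R N] (f : M →ₗ[R] N) :
    IsUSEpi R S f ↔ ∃ s ∈ S, ∀ n : N, s • n ∈ LinearMap.range f := by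
  constructor
  · rintro ⟨s, hs, h⟩
    refine ⟨s, hs, fun n => ?_⟩
    have := h (Submodule.Quotient.mk n)
    rwa [← Submodule.Quotient.mk_smul, Submodule.Quotient.mk_eq_zero] at this
  · rintro ⟨s, hs, h⟩
    refine ⟨s, hs, fun t => ?_⟩
    obtain ⟨n, rfl⟩ := Submodule.Quotient.mk_surjective _ t
    rw [← Submodule.Quotient.mk_smul, Submodule.Quotient.mk_eq_zero]
    exact h n

lemma isUSMono_iff {M N : Type*} [AddCommGroup M] [Module R M]
    [AddCommGroup N] [Module R N] (f : M →ₗ[R] N) :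
    IsUSMono R S f ↔ ∃ s ∈ S, ∀ m : M, f m = 0 → s • m = 0 := by
  constructor
  · rintro ⟨s, hs, h⟩
    refine ⟨s, hs, fun m hm => ?_⟩
    simpa using congrArg Subtype.val (h ⟨m, LinearMap.mem_ker.mpr hm⟩)
  · rintro ⟨s, hs, h⟩
    exact ⟨s, hs, fun t => Subtype.ext (h t.1 (LinearMap.mem_ker.mp t.2))⟩

lemma retract_of_semisimple {M : Type v} [AddCommGroup M] [Module R M]
    (h : IsUSSemisimple R S M) {K : Type v} [AddCommGroup K] [Module R K]
    (f : K →ₗ[R] M) (hf : IsUSMono R S f) :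
    ∃ s ∈ S, ∃ f' : M →ₗ[R] K, f' ∘ₗ f = s • LinearMap.id := by
  refine h K (M ⧸ LinearMap.range f) f (LinearMap.range f).mkQ hf ?_ ?_
  · refine ⟨1, S.one_mem, fun t => ?_⟩
    rw [one_smul]
    obtain ⟨q, rfl⟩ := Submodule.Quotient.mk_surjective _ t
    rw [Submodule.Quotient.mk_eq_zero]
    obtain ⟨m, hm⟩ := Submodule.Quotient.mk_surjective (LinearMap.range f) q
    exact ⟨m, hm⟩
  · refine ⟨1, S.one_mem, fun x hx => ?_, fun x hx => ?_⟩
    · rw [one_smul]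
      rwa [Submodule.ker_mkQ] at hx
    · rw [one_smul, Submodule.ker_mkQ]
      exact hx

lemma section_of_semisimple {M : Type v} [AddCommGroup M] [Module R M]
    (h : IsUSSemisimple R S M) {N : Type v} [AddCommGroup N] [Module R N]
    (f : M →ₗ[R] N) (hf : IsUSEpi R S f) :
    ∃ s ∈ S, ∃ τ : N →ₗ[R] M, f ∘ₗ τ = s • LinearMap.id := by
  obtain ⟨s₀, hs₀S, hs₀⟩ := (isUSEpi_iff f).mp hf
  obtain ⟨s, hsS, f', hf'⟩ := h (LinearMap.ker f) N (LinearMap.ker f).subtype f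
    ⟨1, S.one_mem, fun t => by
      rw [one_smul]
      exact Subtype.ext (by simpa [Submodule.ker_subtype] using t.2)⟩
    hf
    ⟨1, S.one_mem, fun x hx => by rwa [one_smul, Submodule.range_subtype],
      fun x hx => by rwa [one_smul, ← Submodule.range_subtype (LinearMap.ker f)]⟩
  set π : M →ₗ[R] M := s • LinearMap.id - (LinearMap.ker f).subtype ∘ₗ f' with hπdef
  have hπ : ∀ m : M, π m = s • m - (f' m : M) := fun m => rfl
  have hπker : ∀ m ∈ LinearMap.ker f, π m = 0 := by
    intro m hm
    have h1 := LinearMap.congr_fun hf' ⟨m, hm⟩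
    simp only [LinearMap.comp_apply, Submodule.coe_subtype, LinearMap.smul_apply,
      LinearMap.id_apply] at h1
    rw [hπ, h1]
    simp
  have hfπ : ∀ m : M, f (π m) = s • f m := by
    intro m
    rw [hπ, map_sub, map_smul, LinearMap.mem_ker.mp (f' m).2, sub_zero]
  set τ : N →ₗ[R] M :=
    Submodule.liftQ (LinearMap.ker f) π (fun m hm => LinearMap.mem_ker.mpr (hπker m hm)) ∘ₗ
      (f.quotKerEquivRange.symm : LinearMap.range f →ₗ[R] M ⧸ LinearMap.ker f) ∘ₗ
      LinearMap.codRestrict (LinearMap.range f) (s₀ • LinearMap.id)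
        (fun n => by simpa using hs₀ n) with hτdef
  refine ⟨s * s₀, mul_mem hsS hs₀S, τ, ?_⟩
  ext n
  obtain ⟨m, hm⟩ := hs₀ n
  have h2 : (LinearMap.codRestrict (LinearMap.range f) (s₀ • LinearMap.id)
      (fun n => by simpa using hs₀ n) n) = ⟨f m, LinearMap.mem_range_self f m⟩ := by
    apply Subtype.ext
    simpa using hm.symm
  have h3 : τ n = π m := by
    rw [hτdef]
    simp only [LinearMap.comp_apply, LinearEquiv.coe_coe]
    rw [h2, LinearMap.quotKerEquivRange_symm_apply_image, Submodule.mkQ_apply,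
      Submodule.liftQ_apply]
  simp only [LinearMap.comp_apply, LinearMap.smul_apply, LinearMap.id_apply, h3, hfπ, hm,
    smul_smul]

end Aux

theorem stmt15 (S : Submonoid R) (hS : (0 : R) ∉ S)
    (M : Type v) [AddCommGroup M] [Module R M] :
    List.TFAE
      [ IsUSSemisimple R S M,
        ∀ (N : Type v) [AddCommGroup N] [Module R N], IsUSInjRel R S N M,
        ∀ (N : Type v) [AddCommGroup N] [Module R N], IsUSProjRel R S N M ] := by
  tfae_have 1 → 2 := by
    intro h1 N _ _ K _ _ f hf
    obtain ⟨s, hs, f', hf'⟩ := retract_of_semisimple h1 f hf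
    rw [isUSEpi_iff]
    refine ⟨s, hs, fun g => ⟨g ∘ₗ f', ?_⟩⟩
    ext k
    have hk := LinearMap.congr_fun hf' k
    simp only [LinearMap.comp_apply, LinearMap.smul_apply, LinearMap.id_apply] at hk
    simp [LinearMap.lcomp_apply, hk]
  tfae_have 2 → 1 := by
    intro h2 A _ _ C _ _ f g hf hg hcompat
    have h := h2 A A f hf
    rw [isUSEpi_iff] at h
    obtain ⟨s, hs, h⟩ := h
    obtain ⟨h', hh'⟩ := h LinearMap.id
    refine ⟨s, hs, h', ?_⟩
    ext a
    have := LinearMap.congr_fun hh' a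
    simpa using this
  tfae_have 1 → 3 := by
    intro h1 N _ _ N' _ _ f hf
    obtain ⟨s, hs, τ, hτ⟩ := section_of_semisimple h1 f hf
    rw [isUSEpi_iff]
    refine ⟨s, hs, fun g => ⟨τ ∘ₗ g, ?_⟩⟩
    ext p
    have hp := LinearMap.congr_fun hτ (g p)
    simp only [LinearMap.comp_apply, LinearMap.smul_apply, LinearMap.id_apply] at hp
    simp [LinearMap.llcomp_apply, hp]
  tfae_have 3 → 1 := by
    intro h3 A _ _ C _ _ f g hf hg hcompat
    obtain ⟨s₁, hs₁, hker, hrange⟩ := hcompat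
    obtain ⟨s₂, hs₂, hf2⟩ := (isUSMono_iff f).mp hf
    have hp := h3 C C g hg
    rw [isUSEpi_iff] at hp
    obtain ⟨s, hs, hh⟩ := hp
    obtain ⟨h, hhC⟩ := hh LinearMap.id
    have hgh : ∀ c : C, g (h c) = s • c := by
      intro c
      have := LinearMap.congr_fun hhC c
      simpa using this
    set ψ : M →ₗ[R] M := s₁ • (s • LinearMap.id - h ∘ₗ g) with hψdef
    have hψ : ∀ m : M, ψ m = s₁ • (s • m - h (g m)) := fun m => rfl
    have hψrange : ∀ m : M, ψ m ∈ LinearMap.range f := by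
      intro m
      rw [hψ]
      refine hker _ (LinearMap.mem_ker.mpr ?_)
      rw [map_sub, map_smul, hgh, sub_self]
    set f'' : M →ₗ[R] A :=
      Submodule.liftQ (LinearMap.ker f) (s₂ • LinearMap.id)
          (fun a ha => LinearMap.mem_ker.mpr (by
            simpa using hf2 a (LinearMap.mem_ker.mp ha))) ∘ₗ
        (f.quotKerEquivRange.symm : LinearMap.range f →ₗ[R] A ⧸ LinearMap.ker f) ∘ₗ
        LinearMap.codRestrict (LinearMap.range f) ψ hψrange with hf''def
    refine ⟨s₂ * (s₁ * s), mul_mem hs₂ (mul_mem hs₁ hs), f'', ?_⟩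
    ext a
    have key : ψ (f a) = f ((s₁ * s) • a) := by
      have h0 : s₁ • g (f a) = 0 := by
        have := hrange (f a) (LinearMap.mem_range_self f a)
        rwa [LinearMap.mem_ker, map_smul] at this
      calc ψ (f a) = s₁ • (s • f a) - s₁ • h (g (f a)) := by rw [hψ, smul_sub]
        _ = s₁ • s • f a - h (s₁ • g (f a)) := by rw [map_smul]
        _ = (s₁ * s) • f a := by rw [h0, map_zero, sub_zero, smul_smul]
        _ = f ((s₁ * s) • a) := (map_smul f _ _).symm
    have h2 : (LinearMap.codRestrict (LinearMap.range f) ψ hψrange (f a)) =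
        ⟨f ((s₁ * s) • a), LinearMap.mem_range_self f _⟩ := by
      apply Subtype.ext
      simpa using key
    have h3' : f'' (f a) = s₂ • ((s₁ * s) • a) := by
      rw [hf''def]
      simp only [LinearMap.comp_apply, LinearEquiv.coe_coe]
      rw [h2, LinearMap.quotKerEquivRange_symm_apply_image, Submodule.mkQ_apply,
        Submodule.liftQ_apply]
      rfl
    simp only [LinearMap.comp_apply, LinearMap.smul_apply, LinearMap.id_apply, h3', smul_smul,
      mul_assoc]
  tfae_finish
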